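/- arXiv:2310.13758 — 5 statements merged into one kernel-verified Lean document; each statement's English description precedes it below -/
import Mathlib

section
/- Let f : G → H be a surjective group homomorphism, let P_H be a conjugate invariant positive cone of H, and let P_K be a positive cone of K = ker f that is invariant under conjugation by all elements of G. Then the set P = {g ∈ G : f(g) ∈ P_H or g ∈ P_K} is a conjugate invariant positive cone of G, and f(P \ ker f) = P_H. -/
/-- A conjugate-invariant positive cone of a group. -/
def IsCone {G : Type*} [Group G] (P : Set G) : Prop :=
  (∀ a ∈ P, ∀ b ∈ P, a * b ∈ P) ∧
  (∀ g : G, g ∈ P ∨ g⁻¹ ∈ P ∨ g = 1) ∧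
  ((1 : G) ∉ P) ∧ (∀ g ∈ P, g⁻¹ ∉ P) ∧
  (∀ g x : G, x ∈ P → g⁻¹ * x * g ∈ P)

/-!
The cone on `G` is lexicographic: an element outside `ker f` is positive exactly when its image
is, and an element of `ker f` exactly when it lies in `PK`. Each cone axiom for `G` therefore
splits into the corresponding axiom for `PH` (away from the kernel) and for `PK` (on it);
products mixing the two cases are handled by `f` killing the factor from `PK`.
-/

theorem one_notMem_of_forall_inv_notMem {G : Type*} [Group G] {P : Set G}
    (hinv : ∀ g ∈ P, g⁻¹ ∉ P) : (1 : G) ∉ P :=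
  fun h1 => hinv 1 h1 (by rwa [inv_one])

namespace MonoidHom

variable {G H : Type*} [Group G] [Group H] (f : G →* H) {PH : Set H} {PK : Set G}

theorem mem_preimage_union_iff_of_mem_ker (hPH1 : (1 : H) ∉ PH) {g : G} (hg : g ∈ f.ker) :
    g ∈ f ⁻¹' PH ∪ PK ↔ g ∈ PK := by
  rw [Set.mem_union, Set.mem_preimage, mem_ker.mp hg]
  exact or_iff_right hPH1

theorem mem_preimage_union_iff_of_notMem_ker (hPKker : PK ⊆ f.ker) {g : G} (hg : g ∉ f.ker) :
    g ∈ f ⁻¹' PH ∪ PK ↔ f g ∈ PH :=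
  or_iff_left fun h => hg (hPKker h)

theorem mul_mem_preimage_union (hPHmul : ∀ a ∈ PH, ∀ b ∈ PH, a * b ∈ PH)
    (hPKker : PK ⊆ f.ker) (hPKmul : ∀ a ∈ PK, ∀ b ∈ PK, a * b ∈ PK) :
    ∀ a ∈ f ⁻¹' PH ∪ PK, ∀ b ∈ f ⁻¹' PH ∪ PK, a * b ∈ f ⁻¹' PH ∪ PK := by
  have hker : ∀ g ∈ PK, f g = 1 := fun g hg => hPKker hg
  rintro a (ha | ha) b (hb | hb)
  · exact Or.inl (by rw [Set.mem_preimage, map_mul]; exact hPHmul _ ha _ hb)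
  · exact Or.inl (by rwa [Set.mem_preimage, map_mul, hker b hb, mul_one])
  · exact Or.inl (by rwa [Set.mem_preimage, map_mul, hker a ha, one_mul])
  · exact Or.inr (hPKmul a ha b hb)

theorem preimage_union_total (hPHtotal : ∀ h : H, h ∈ PH ∨ h⁻¹ ∈ PH ∨ h = 1)
    (hPKtotal : ∀ g ∈ f.ker, g ∈ PK ∨ g⁻¹ ∈ PK ∨ g = 1) (g : G) :
    g ∈ f ⁻¹' PH ∪ PK ∨ g⁻¹ ∈ f ⁻¹' PH ∪ PK ∨ g = 1 := by
  rcases hPHtotal (f g) with h | h | h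
  · exact Or.inl (Or.inl h)
  · exact Or.inr (Or.inl (Or.inl (by rwa [Set.mem_preimage, map_inv])))
  · rcases hPKtotal g h with h' | h' | h'
    · exact Or.inl (Or.inr h')
    · exact Or.inr (Or.inl (Or.inr h'))
    · exact Or.inr (Or.inr h')

theorem inv_notMem_preimage_union (hPH1 : (1 : H) ∉ PH) (hPHinv : ∀ h ∈ PH, h⁻¹ ∉ PH)
    (hPKker : PK ⊆ f.ker) (hPKinv : ∀ g ∈ PK, g⁻¹ ∉ PK) :
    ∀ g ∈ f ⁻¹' PH ∪ PK, g⁻¹ ∉ f ⁻¹' PH ∪ PK := by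
  intro g hg
  by_cases hgk : g ∈ f.ker
  · have hgk' : g⁻¹ ∈ f.ker := inv_mem hgk
    rw [f.mem_preimage_union_iff_of_mem_ker hPH1 hgk] at hg
    rw [f.mem_preimage_union_iff_of_mem_ker hPH1 hgk']
    exact hPKinv g hg
  · have hgk' : g⁻¹ ∉ f.ker := fun h => hgk (by simpa using inv_mem h)
    rw [f.mem_preimage_union_iff_of_notMem_ker hPKker hgk] at hg
    rw [f.mem_preimage_union_iff_of_notMem_ker hPKker hgk', map_inv]
    exact hPHinv _ hg

theorem conj_mem_preimage_union (hPHconj : ∀ g x : H, x ∈ PH → g⁻¹ * x * g ∈ PH)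
    (hPKconj : ∀ g x : G, x ∈ PK → g⁻¹ * x * g ∈ PK) :
    ∀ g x : G, x ∈ f ⁻¹' PH ∪ PK → g⁻¹ * x * g ∈ f ⁻¹' PH ∪ PK := by
  rintro g x (hx | hx)
  · exact Or.inl (by simpa using hPHconj (f g) (f x) hx)
  · exact Or.inr (hPKconj g x hx)

theorem image_preimage_union_diff_ker (hf : Function.Surjective f) (hPH1 : (1 : H) ∉ PH)
    (hPKker : PK ⊆ f.ker) : f '' ((f ⁻¹' PH ∪ PK) \ f.ker) = PH := by
  ext h
  constructor
  · rintro ⟨g, ⟨hg, hgk⟩, rfl⟩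
    exact (f.mem_preimage_union_iff_of_notMem_ker hPKker hgk).mp hg
  · intro hh
    obtain ⟨g, rfl⟩ := hf h
    have hgk : g ∉ f.ker := fun hg => hPH1 (by rwa [mem_ker.mp hg] at hh)
    exact ⟨g, ⟨Or.inl hh, hgk⟩, rfl⟩

end MonoidHom

theorem IsCone.preimage_union {G H : Type*} [Group G] [Group H] (f : G →* H) {PH : Set H}
    (hPH : IsCone PH) {PK : Set G} (hPKker : PK ⊆ f.ker)
    (hPKmul : ∀ a ∈ PK, ∀ b ∈ PK, a * b ∈ PK)
    (hPKtotal : ∀ g ∈ f.ker, g ∈ PK ∨ g⁻¹ ∈ PK ∨ g = 1)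
    (hPKinv : ∀ g ∈ PK, g⁻¹ ∉ PK)
    (hPKconj : ∀ g x : G, x ∈ PK → g⁻¹ * x * g ∈ PK) :
    IsCone (f ⁻¹' PH ∪ PK) := by
  obtain ⟨hmul, htotal, hone, hinv, hconj⟩ := hPH
  have hinv' := f.inv_notMem_preimage_union hone hinv hPKker hPKinv
  exact ⟨f.mul_mem_preimage_union hmul hPKker hPKmul, f.preimage_union_total htotal hPKtotal,
    one_notMem_of_forall_inv_notMem hinv', hinv', f.conj_mem_preimage_union hconj hPKconj⟩

theorem cone_of_extension_general {G H : Type*} [Group G] [Group H] (f : G →* H)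
    (hf : Function.Surjective f)
    (PH : Set H) (hPH : IsCone PH)
    (PK : Set G) (hPKker : PK ⊆ (f.ker : Set G))
    (hPKmul : ∀ a ∈ PK, ∀ b ∈ PK, a * b ∈ PK)
    (hPKtotal : ∀ g ∈ f.ker, g ∈ PK ∨ g⁻¹ ∈ PK ∨ g = 1)
    (hPKdisj : ∀ g ∈ PK, g⁻¹ ∉ PK)
    (hPKconj : ∀ g x : G, x ∈ PK → g⁻¹ * x * g ∈ PK) :
    IsCone {g : G | f g ∈ PH ∨ g ∈ PK} ∧
    f '' ({g : G | f g ∈ PH ∨ g ∈ PK} \ (f.ker : Set G)) = PH :=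
  ⟨hPH.preimage_union f hPKker hPKmul hPKtotal hPKdisj hPKconj,
    f.image_preimage_union_diff_ker hf hPH.2.2.1 hPKker⟩

/-- constructing a positive cone on `G` from a cone on `H` and a
`G`-conjugation-invariant cone on `ker f`, for a surjection `f : G → H`. -/
theorem cone_of_extension {G H : Type*} [Group G] [Group H] (f : G →* H)
    (hf : Function.Surjective f)
    (PH : Set H) (hPH : IsCone PH)
    (PK : Set G) (hPKker : PK ⊆ (f.ker : Set G))
    (hPKmul : ∀ a ∈ PK, ∀ b ∈ PK, a * b ∈ PK)
    (hPKtotal : ∀ g ∈ f.ker, g ∈ PK ∨ g⁻¹ ∈ PK ∨ g = 1)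
    (hPKone : (1 : G) ∉ PK)
    (hPKdisj : ∀ g ∈ PK, g⁻¹ ∉ PK)
    (hPKconj : ∀ g x : G, x ∈ PK → g⁻¹ * x * g ∈ PK) :
    IsCone {g : G | f g ∈ PH ∨ g ∈ PK} ∧
    f '' ({g : G | f g ∈ PH ∨ g ∈ PK} \ (f.ker : Set G)) = PH :=
  cone_of_extension_general f hf PH hPH PK hPKker hPKmul hPKtotal hPKdisj hPKconj
end

section
/- Let G be a group and φ an automorphism of G. The semidirect product G ⋊_φ ℤ is bi-orderable if and only if G admits a bi-order (equivalently, a conjugate invariant positive cone) that is invariant under φ. -/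
namespace IsCone

variable {G : Type*} [Group G] {P : Set G}

theorem comap {H : Type*} [Group H] (hP : IsCone P) (f : H →* G) (hf : Function.Injective f) :
    IsCone (f ⁻¹' P) := by
  obtain ⟨hmul, htri, hone, hinv, hconj⟩ := hP
  refine ⟨fun a ha b hb => ?_, fun g => ?_, by simpa using hone, fun g hg h => ?_,
    fun g x hx => ?_⟩
  · simpa using hmul _ ha _ hb
  · rcases htri (f g) with h | h | h
    · exact Or.inl h
    · exact Or.inr (Or.inl (by simpa using h))
    · exact Or.inr (Or.inr (hf (by simpa using h)))
  · exact hinv _ hg (by simpa using h)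
  · simpa using hconj (f g) _ hx

theorem symm_apply_mem (hP : IsCone P) {φ : G ≃* G} (hφ : ∀ g ∈ P, φ g ∈ P) :
    ∀ g ∈ P, φ.symm g ∈ P := by
  obtain ⟨-, htri, hone, hinv, -⟩ := hP
  intro g hg
  rcases htri (φ.symm g) with h | h | h
  · exact h
  · exact absurd (by simpa using hφ _ h) (hinv g hg)
  · exact absurd (by simpa using congrArg φ h) (fun hg1 : g = 1 => hone (hg1 ▸ hg))

theorem zpow_apply_mem (hP : IsCone P) {φ : MulAut G} (hφ : ∀ g ∈ P, φ g ∈ P) (n : ℤ) :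
    ∀ g ∈ P, (φ ^ n) g ∈ P := by
  induction n using Int.induction_on with
  | zero => simp
  | succ k ih =>
    intro g hg
    simpa [zpow_add, MulAut.mul_apply] using ih (φ g) (hφ g hg)
  | pred k ih =>
    intro g hg
    simpa [zpow_sub, MulAut.mul_apply] using ih _ (hP.symm_apply_mem hφ g hg)

theorem inl_aut_mem {N H : Type*} [Group N] [Group H] {ψ : H →* MulAut N}
    {P : Set (N ⋊[ψ] H)} (hP : IsCone P) (h : H) {n : N} (hn : SemidirectProduct.inl n ∈ P) :
    SemidirectProduct.inl (ψ h n) ∈ P := by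
  obtain ⟨-, -, -, -, hconj⟩ := hP
  simpa [SemidirectProduct.inl_aut] using hconj (SemidirectProduct.inr h)⁻¹ _ hn

end IsCone

theorem isCone_setOf_one_lt {G : Type*} [CommGroup G] [LinearOrder G] [IsOrderedMonoid G] :
    IsCone {g : G | 1 < g} := by
  refine ⟨fun a ha b hb => one_lt_mul' ha hb, fun g => ?_, lt_irrefl 1,
    fun g hg h => ?_, fun g x hx => ?_⟩
  · rcases lt_trichotomy 1 g with h | h | h
    · exact Or.inl h
    · exact Or.inr (Or.inr h.symm)
    · exact Or.inr (Or.inl (one_lt_inv'.mpr h))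
  · exact lt_asymm hg (one_lt_inv'.mp h)
  · simpa [mul_comm g⁻¹ x, mul_assoc] using hx

namespace SemidirectProduct

variable {N H : Type*} [Group N] [Group H] {ψ : H →* MulAut N}

def lexCone (Q : Set N) (R : Set H) : Set (N ⋊[ψ] H) :=
  {p | p.right ∈ R ∨ p.right = 1 ∧ p.left ∈ Q}

theorem isCone_lexCone {Q : Set N} {R : Set H} (hQ : IsCone Q)
    (hQψ : ∀ h, ∀ n ∈ Q, ψ h n ∈ Q) (hR : IsCone R) : IsCone (lexCone (ψ := ψ) Q R) := by
  obtain ⟨hmul, htri, hone, hinv, hconj⟩ := hQ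
  obtain ⟨hmulR, htriR, honeR, hinvR, hconjR⟩ := hR
  refine ⟨?_, fun p => ?_, ?_, ?_, ?_⟩
  · rintro a (ha | ⟨ha1, haQ⟩) b (hb | ⟨hb1, hbQ⟩)
    · exact Or.inl (hmulR _ ha _ hb)
    · exact Or.inl (by simpa [hb1] using ha)
    · exact Or.inl (by simpa [ha1] using hb)
    · exact Or.inr ⟨by simp [ha1, hb1], by simpa [ha1] using hmul _ haQ _ hbQ⟩
  · rcases htriR p.right with h | h | h
    · exact Or.inl (Or.inl h)
    · exact Or.inr (Or.inl (Or.inl h))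
    · rcases htri p.left with hl | hl | hl
      · exact Or.inl (Or.inr ⟨h, hl⟩)
      · exact Or.inr (Or.inl (Or.inr ⟨by simp [h], by simpa [h] using hl⟩))
      · exact Or.inr (Or.inr (SemidirectProduct.ext hl h))
  · rintro (h | ⟨-, h⟩)
    · exact honeR h
    · exact hone h
  · rintro p (hp | ⟨hp1, hpQ⟩) (h | ⟨h1, hQ'⟩)
    · exact hinvR _ hp h
    · exact honeR (by simpa [inv_eq_one.mp h1] using hp)
    · exact honeR (by simpa [hp1] using h)
    · exact hinv _ hpQ (by simpa [hp1] using hQ')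
  · rintro g x (hx | ⟨hx1, hxQ⟩)
    · exact Or.inl (hconjR g.right _ hx)
    · refine Or.inr ⟨by simp [hx1], ?_⟩
      simpa [hx1, mul_assoc] using hQψ g.right⁻¹ _ (hconj g.left _ hxQ)

end SemidirectProduct

/-- `G ⋊_φ ℤ` is bi-orderable iff `G` has a φ-invariant
conjugate-invariant positive cone (i.e. a φ-invariant bi-order). -/
theorem semidirect_biorderable_iff {G : Type*} [Group G] (φ : G ≃* G) :
    (∃ P : Set (SemidirectProduct G (Multiplicative ℤ)
        (zpowersHom (MulAut G) (φ : MulAut G))), IsCone P) ↔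
    (∃ P : Set G, IsCone P ∧ ∀ g ∈ P, φ g ∈ P) := by
  constructor
  · rintro ⟨P, hP⟩
    refine ⟨SemidirectProduct.inl ⁻¹' P, hP.comap _ SemidirectProduct.inl_injective,
      fun g hg => ?_⟩
    simpa using hP.inl_aut_mem (Multiplicative.ofAdd 1) hg
  · rintro ⟨Q, hQ, hφ⟩
    refine ⟨SemidirectProduct.lexCone Q {n | 1 < n},
      SemidirectProduct.isCone_lexCone hQ (fun n g hg => ?_) isCone_setOf_one_lt⟩
    simpa using hQ.zpow_apply_mem (φ := φ) hφ n.toAdd g hg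
end

section
/- Let G be a free group of finite rank with lower central series G = G₁ ⊇ G₂ ⊇ ⋯ (G_{n+1} = [G_n, G]). A standard bi-order on G (one constructed lexicographically from positive cones on the lower central series quotients A_n = G_n/G_{n+1}) has the property that every term G_n of the lower central series is a convex subgroup. Conversely, if every G_n is convex with respect to a bi-order of G, then that bi-order is standard. -/
/-!
Write `g > 1` for `g ∈ P` and let `N 0 = G ≥ N 1 ≥ ⋯` be normal subgroups (here the lower
central series). If the sign of `g ∈ N m \ N (m + 1)` only depends on `g N (m + 1)`, then an
element `g ∉ N n` squeezed between `a, b ∈ N n` is impossible: taking the `m < n` with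
`g ∈ N m \ N (m + 1)`, multiplying by `a⁻¹` or `b` does not change the class of `g` or `g⁻¹`,
so both `g > 1` and `g⁻¹ > 1`. Conversely, if `N (n + 1)` is convex and `g > 1 > h` lie in the
same coset of `N (n + 1)`, then `1 < g < h⁻¹ g ∈ N (n + 1)` (using bi-invariance), hence
`g ∈ N (n + 1)`.
-/

section

variable {G : Type*} [Group G]

/-- Convexity of `H` for the left order `a < g ↔ a⁻¹ * g ∈ P`. -/
def IsConvexSubgroup (P : Set G) (H : Subgroup G) : Prop :=
  ∀ a ∈ H, ∀ b ∈ H, ∀ g : G, a⁻¹ * g ∈ P → g⁻¹ * b ∈ P → g ∈ H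

def IsStandardCone (P : Set G) (N : ℕ → Subgroup G) : Prop :=
  ∀ n : ℕ, ∀ g h : G, g ∈ N n → h ∈ N n → g ∉ N (n + 1) → g⁻¹ * h ∈ N (n + 1) →
    (g ∈ P ↔ h ∈ P)

theorem Nat.exists_lt_and_not_succ {p : ℕ → Prop} (h0 : p 0) {n : ℕ} (hn : ¬p n) :
    ∃ m < n, p m ∧ ¬p (m + 1) := by
  induction n with
  | zero => exact absurd h0 hn
  | succ n ih =>
    by_cases hpn : p n
    · exact ⟨n, n.lt_succ_self, hpn, hn⟩
    · obtain ⟨m, hmn, hm⟩ := ih hpn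
      exact ⟨m, hmn.trans n.lt_succ_self, hm⟩

theorem IsConvexSubgroup.mem_of_inv_mul_mem {P : Set G} {H : Subgroup G}
    (hconv : IsConvexSubgroup P H) (hconj : ∀ g x : G, x ∈ P → g⁻¹ * x * g ∈ P)
    {g h : G} (hg : g ∈ P) (hh : h⁻¹ ∈ P) (hgh : g⁻¹ * h ∈ H) : g ∈ H := by
  have hhg : h⁻¹ * g ∈ H := by simpa using inv_mem hgh
  refine hconv 1 (one_mem H) (h⁻¹ * g) hhg g (by simpa using hg) ?_
  simpa [mul_assoc] using hconj g h⁻¹ hh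

theorem IsConvexSubgroup.mem_of_mem_of_inv_mul_mem {P : Set G} {H : Subgroup G}
    (hconv : IsConvexSubgroup P H) (htotal : ∀ g : G, g ∈ P ∨ g⁻¹ ∈ P ∨ g = 1)
    (hconj : ∀ g x : G, x ∈ P → g⁻¹ * x * g ∈ P)
    {g h : G} (hgH : g ∉ H) (hgh : g⁻¹ * h ∈ H) (hg : g ∈ P) : h ∈ P := by
  rcases htotal h with hh | hh | rfl
  · exact hh
  · exact absurd (hconv.mem_of_inv_mul_mem hconj hg hh hgh) hgH
  · exact absurd (by simpa using inv_mem hgh) hgH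

theorem isStandardCone_of_forall_isConvexSubgroup {P : Set G} {N : ℕ → Subgroup G}
    (htotal : ∀ g : G, g ∈ P ∨ g⁻¹ ∈ P ∨ g = 1)
    (hconj : ∀ g x : G, x ∈ P → g⁻¹ * x * g ∈ P)
    (hconv : ∀ n, IsConvexSubgroup P (N n)) : IsStandardCone P N := by
  intro n g h _ _ hg hgh
  have hhg : h⁻¹ * g ∈ N (n + 1) := by simpa using inv_mem hgh
  have hh : h ∉ N (n + 1) := fun hh => hg (by simpa using mul_mem hh hhg)
  exact ⟨(hconv (n + 1)).mem_of_mem_of_inv_mul_mem htotal hconj hg hgh,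
    (hconv (n + 1)).mem_of_mem_of_inv_mul_mem htotal hconj hh hhg⟩

theorem IsStandardCone.mul_mem_iff {P : Set G} {N : ℕ → Subgroup G}
    (hstd : IsStandardCone P N) (hanti : Antitone N) {m : ℕ} {g k : G}
    (hg : g ∈ N m) (hg' : g ∉ N (m + 1)) (hk : k ∈ N (m + 1)) : g * k ∈ P ↔ g ∈ P :=
  (hstd m g (g * k) hg (mul_mem hg (hanti m.le_succ hk)) hg' (by simpa using hk)).symm

theorem IsStandardCone.isConvexSubgroup {P : Set G} {N : ℕ → Subgroup G} [∀ n, (N n).Normal]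
    (hstd : IsStandardCone P N) (hN0 : N 0 = ⊤) (hanti : Antitone N)
    (hdisj : ∀ g ∈ P, g⁻¹ ∉ P) (n : ℕ) : IsConvexSubgroup P (N n) := by
  intro a ha b hb g hag hgb
  by_contra hgn
  obtain ⟨m, hmn, hgm, hgm'⟩ :=
    Nat.exists_lt_and_not_succ (p := (g ∈ N ·)) (by simp [hN0]) hgn
  have ha' : a ∈ N (m + 1) := hanti hmn ha
  have hb' : b ∈ N (m + 1) := hanti hmn hb
  -- `a⁻¹ * g = g * (g⁻¹ * a⁻¹ * g)` lies in the same coset of the normal subgroup `N (m + 1)`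
  have hgP : g ∈ P := by
    have hconj : g⁻¹ * a⁻¹ * g ∈ N (m + 1) := by
      simpa using (inferInstance : (N (m + 1)).Normal).conj_mem _ (inv_mem ha') g⁻¹
    rw [← hstd.mul_mem_iff hanti hgm hgm' hconj]
    simpa [mul_assoc] using hag
  have hginvP : g⁻¹ ∈ P :=
    (hstd.mul_mem_iff hanti (inv_mem hgm) (fun h => hgm' (by simpa using inv_mem h)) hb').1 hgb
  exact hdisj g hgP hginvP

theorem isStandardCone_iff_forall_isConvexSubgroup {P : Set G} {N : ℕ → Subgroup G}
    [∀ n, (N n).Normal] (hN0 : N 0 = ⊤) (hanti : Antitone N)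
    (htotal : ∀ g : G, g ∈ P ∨ g⁻¹ ∈ P ∨ g = 1) (hdisj : ∀ g ∈ P, g⁻¹ ∉ P)
    (hconj : ∀ g x : G, x ∈ P → g⁻¹ * x * g ∈ P) :
    IsStandardCone P N ↔ ∀ n, IsConvexSubgroup P (N n) :=
  ⟨fun hstd => hstd.isConvexSubgroup hN0 hanti hdisj,
    isStandardCone_of_forall_isConvexSubgroup htotal hconj⟩

end

theorem standard_iff_lcs_convex_general {r : ℕ} (P : Set (FreeGroup (Fin r)))
    (htotal : ∀ g : FreeGroup (Fin r), g ∈ P ∨ g⁻¹ ∈ P ∨ g = 1)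
    (hdisj : ∀ g ∈ P, g⁻¹ ∉ P)
    (hconj : ∀ g x : FreeGroup (Fin r), x ∈ P → g⁻¹ * x * g ∈ P) :
    (∀ n : ℕ, ∀ g h : FreeGroup (Fin r),
        g ∈ (⊤ : Subgroup (FreeGroup (Fin r))).lowerCentralSeries n →
        h ∈ (⊤ : Subgroup (FreeGroup (Fin r))).lowerCentralSeries n →
        g ∉ (⊤ : Subgroup (FreeGroup (Fin r))).lowerCentralSeries (n + 1) →
        g⁻¹ * h ∈ (⊤ : Subgroup (FreeGroup (Fin r))).lowerCentralSeries (n + 1) →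
        (g ∈ P ↔ h ∈ P)) ↔
    (∀ n : ℕ, ∀ a ∈ (⊤ : Subgroup (FreeGroup (Fin r))).lowerCentralSeries n,
        ∀ b ∈ (⊤ : Subgroup (FreeGroup (Fin r))).lowerCentralSeries n,
        ∀ g : FreeGroup (Fin r), a⁻¹ * g ∈ P → g⁻¹ * b ∈ P →
        g ∈ (⊤ : Subgroup (FreeGroup (Fin r))).lowerCentralSeries n) :=
  isStandardCone_iff_forall_isConvexSubgroup (Subgroup.lowerCentralSeries_zero ⊤)
    (Subgroup.lowerCentralSeries_antitone ⊤) htotal hdisj hconj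

/-- a bi-order (given by its positive cone `P`) on a finite rank
free group is standard — i.e. the sign of an element depends only on its class
in `G_{n(g)} / G_{n(g)+1}` — if and only if every term of the lower central
series is convex. -/
theorem standard_iff_lcs_convex {r : ℕ} (P : Set (FreeGroup (Fin r)))
    (hmul : ∀ a ∈ P, ∀ b ∈ P, a * b ∈ P)
    (htotal : ∀ g : FreeGroup (Fin r), g ∈ P ∨ g⁻¹ ∈ P ∨ g = 1)
    (hone : (1 : FreeGroup (Fin r)) ∉ P)
    (hdisj : ∀ g ∈ P, g⁻¹ ∉ P)
    (hconj : ∀ g x : FreeGroup (Fin r), x ∈ P → g⁻¹ * x * g ∈ P) :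
    (∀ n : ℕ, ∀ g h : FreeGroup (Fin r),
        g ∈ (⊤ : Subgroup (FreeGroup (Fin r))).lowerCentralSeries n →
        h ∈ (⊤ : Subgroup (FreeGroup (Fin r))).lowerCentralSeries n →
        g ∉ (⊤ : Subgroup (FreeGroup (Fin r))).lowerCentralSeries (n + 1) →
        g⁻¹ * h ∈ (⊤ : Subgroup (FreeGroup (Fin r))).lowerCentralSeries (n + 1) →
        (g ∈ P ↔ h ∈ P)) ↔
    (∀ n : ℕ, ∀ a ∈ (⊤ : Subgroup (FreeGroup (Fin r))).lowerCentralSeries n,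
        ∀ b ∈ (⊤ : Subgroup (FreeGroup (Fin r))).lowerCentralSeries n,
        ∀ g : FreeGroup (Fin r), a⁻¹ * g ∈ P → g⁻¹ * b ∈ P →
        g ∈ (⊤ : Subgroup (FreeGroup (Fin r))).lowerCentralSeries n) :=
  standard_iff_lcs_convex_general P htotal hdisj hconj
end

section
/- Let (G, <) be a bi-ordered group, C a convex subgroup, and suppose φ : G → G is an automorphism preserving C and the order <. Suppose μ : G → ℝ is a homomorphism such that for all g, the sign of μ(g) is preserved by φ (i.e., μ(g) > 0 iff μ(φ(g)) > 0, and μ(g) = 0 iff μ(φ(g)) = 0). Then for all v, w ∈ G with μ(v) ≠ 0 and μ(w) ≠ 0, μ(v)/μ(w) = μ(φ(v))/μ(φ(w)). -/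
/-!
A rational number `q = m / n` lies below `μ v / μ w` (with `μ w > 0`) iff `μ (n • v - m • w) > 0`.
So a positive ratio of values of a real character is determined by the character's positive cone,
and `μ ∘ φ` has the same positive cone as `μ`.
-/

theorem div_eq_div_of_forall_int_mul_lt_iff {x y x' y' : ℝ} (hy : 0 < y) (hy' : 0 < y')
    (h : ∀ a b : ℤ, a * y < b * x ↔ a * y' < b * x') : x / y = x' / y' := by
  refine eq_of_forall_rat_lt_iff_lt fun q => ?_
  have hden : (0 : ℝ) < q.den := by exact_mod_cast q.pos
  have rat_lt_div_iff : ∀ z t : ℝ, 0 < t → ((q : ℝ) < z / t ↔ q.num * t < (q.den : ℤ) * z) := by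
    intro z t ht
    rw [lt_div_iff₀ ht, Rat.cast_def, div_mul_eq_mul_div, div_lt_iff₀ hden, Int.cast_natCast,
      mul_comm z]
  rw [rat_lt_div_iff x y hy, rat_lt_div_iff x' y' hy']
  exact h q.num q.den

namespace AddMonoidHom

variable {A : Type*} [AddGroup A] {μ ν : A →+ ℝ}

theorem int_mul_lt_iff_of_pos_iff (h : ∀ g, 0 < μ g ↔ 0 < ν g) (v w : A) (a b : ℤ) :
    a * μ w < b * μ v ↔ a * ν w < b * ν v := by
  simpa only [map_sub, map_zsmul, zsmul_eq_mul, sub_pos] using h (b • v - a • w)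

theorem div_eq_div_of_pos_iff (h : ∀ g, 0 < μ g ↔ 0 < ν g) (v : A) {w : A} (hw : μ w ≠ 0) :
    μ v / μ w = ν v / ν w := by
  have of_pos : ∀ w, 0 < μ w → μ v / μ w = ν v / ν w := fun w hw =>
    div_eq_div_of_forall_int_mul_lt_iff hw ((h w).mp hw) (int_mul_lt_iff_of_pos_iff h v w)
  rcases hw.lt_or_gt with hw | hw
  · have := of_pos (-w) (by rwa [map_neg, neg_pos])
    rwa [map_neg, map_neg, div_neg, div_neg, neg_inj] at this
  · exact of_pos w hw

end AddMonoidHom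

theorem ratio_preserved_general {G : Type*} [Group G]
    (φ : G ≃* G)
    (μ : G → ℝ) (hμ : ∀ g h : G, μ (g * h) = μ g + μ h)
    (hpos : ∀ g : G, 0 < μ g ↔ 0 < μ (φ g)) :
    ∀ v w : G, μ v ≠ 0 → μ w ≠ 0 → μ v / μ w = μ (φ v) / μ (φ w) := by
  intro v w _ hw
  let μ' : Additive G →+ ℝ := AddMonoidHom.mk' (fun g => μ g.toMul) fun g h => hμ g.toMul h.toMul
  let ν' : Additive G →+ ℝ := μ'.comp (MulEquiv.toAdditive φ).toAddMonoidHom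
  exact AddMonoidHom.div_eq_div_of_pos_iff (μ := μ') (ν := ν') (fun g => hpos g.toMul)
    (Additive.ofMul v) (w := Additive.ofMul w) hw

/-- if `μ : G → ℝ` is a homomorphism whose sign pattern is
preserved by an order- and `C`-preserving automorphism `φ` of the bi-ordered
group `G`, then `φ` preserves ratios of `μ`-values. -/
theorem ratio_preserved {G : Type*} [Group G] [LinearOrder G]
    [CovariantClass G G (· * ·) (· < ·)]
    [CovariantClass G G (Function.swap (· * ·)) (· < ·)]
    (C : Subgroup G)
    (hC : ∀ a ∈ C, ∀ b ∈ C, ∀ g : G, a < g → g < b → g ∈ C)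
    (φ : G ≃* G)
    (hφC : ∀ g : G, g ∈ C ↔ φ g ∈ C)
    (hφord : ∀ a b : G, a < b → φ a < φ b)
    (μ : G → ℝ) (hμ : ∀ g h : G, μ (g * h) = μ g + μ h)
    (hpos : ∀ g : G, 0 < μ g ↔ 0 < μ (φ g))
    (hzero : ∀ g : G, μ g = 0 ↔ μ (φ g) = 0) :
    ∀ v w : G, μ v ≠ 0 → μ w ≠ 0 → μ v / μ w = μ (φ v) / μ (φ w) :=
  ratio_preserved_general φ μ hμ hpos
end

section
/- Let (G, <) be a finitely generated nontrivial bi-ordered group. Then among the proper subgroups of G convex with respect to <, there is a unique maximal one C; moreover C is normal in G, the quotient G/C is abelian, and any order-preserving automorphism φ of G satisfies φ(C) = C. -/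
/-!
Proper convex subgroups form a chain, so their union `C` is a convex subgroup; finite generation
keeps it proper (all generators already lie in one proper convex subgroup), and it is then the
unique maximal one. Order-preserving automorphisms, conjugations among them, permute the proper
convex subgroups and hence fix `C`.

For a commutator `c = ⁅x, y⁆ > 1`, the elements bounded by powers of `c` form a convex subgroup
containing `c`, and it is proper. Otherwise every element lies between consecutive powers of `c`,
and the exponent `p g` of the lower one is a quasi-morphism
(`p g + p h ≤ p (g * h) ≤ p g + p h + 1`), so it moves by at most `2` under conjugation. But
`x * y = c * (y * x)`, and both `x * y` and `y * x * c` are conjugate to `y * x`; since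
`a ^ n * b ^ n ≤ (a * b) ^ n` whenever `a * b ≤ b * a`, the smaller of `c * (y * x)` and
`y * x * c` has fifth power with `p` at least `5` above that of `(y * x) ^ 5`, against at most `4`.
-/

theorem Set.ordConnected_iff_forall_lt_lt {α : Type*} [PartialOrder α] {s : Set α} :
    s.OrdConnected ↔ ∀ a ∈ s, ∀ b ∈ s, ∀ g, a < g → g < b → g ∈ s :=
  ⟨fun h _ ha _ hb _ hag hgb => h.out ha hb ⟨hag.le, hgb.le⟩,
    fun h => Set.ordConnected_of_Ioo fun a ha b hb _ g hg => h a ha b hb g hg.1 hg.2⟩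

namespace Subgroup

variable {G : Type*} [Group G]

theorem ordConnected_sSup_of_directedOn [Preorder G] {K : Set (Subgroup G)} (hne : K.Nonempty)
    (hdir : DirectedOn (· ≤ ·) K) (hK : ∀ H ∈ K, (H : Set G).OrdConnected) :
    ((sSup K : Subgroup G) : Set G).OrdConnected := by
  refine ⟨fun x hx y hy z hz => ?_⟩
  simp only [SetLike.mem_coe, mem_sSup_of_directedOn hne hdir] at hx hy ⊢
  obtain ⟨H₁, h₁, hx⟩ := hx
  obtain ⟨H₂, h₂, hy⟩ := hy
  obtain ⟨H, hH, h₁H, h₂H⟩ := hdir H₁ h₁ H₂ h₂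
  exact ⟨H, hH, (hK H hH).out (h₁H hx) (h₂H hy) hz⟩

theorem top_mem_of_sSup_eq_top [Group.FG G] {K : Set (Subgroup G)} (hne : K.Nonempty)
    (hdir : DirectedOn (· ≤ ·) K) (hK : sSup K = ⊤) : ⊤ ∈ K := by
  obtain ⟨S, hS⟩ := Group.fg_def.1 ‹Group.FG G›
  have hcover : (S : Set G) ⊆ ⋃ H ∈ K, (H : Set G) := fun s _ => by
    simp [← mem_sSup_of_directedOn hne hdir, hK]
  obtain ⟨H, hH, hSH⟩ := hdir.exists_mem_subset_of_finset_subset_biUnion hne hcover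
  rwa [← top_le_iff.1 (hS ▸ (closure_le H).2 hSH)]

end Subgroup

section ProperConvex

variable {G : Type*} [Group G] [PartialOrder G]

variable (G) in
def properConvexSubgroups : Set (Subgroup G) :=
  {H | (H : Set G).OrdConnected ∧ H ≠ ⊤}

theorem bot_mem_properConvexSubgroups [Nontrivial G] : ⊥ ∈ properConvexSubgroups G :=
  ⟨by simpa using Set.ordConnected_singleton, bot_ne_top⟩

theorem comap_mem_properConvexSubgroups {φ : G ≃* G} (hφ : Monotone φ) {H : Subgroup G}
    (hH : H ∈ properConvexSubgroups G) : H.comap (φ : G →* G) ∈ properConvexSubgroups G :=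
  ⟨hH.1.preimage_mono hφ, fun h => hH.2 <| eq_top_iff.2 fun g _ => by
    simpa using (h ▸ Subgroup.mem_top (φ.symm g) : φ.symm g ∈ H.comap (φ : G →* G))⟩

end ProperConvex

attribute [local instance] mulLeftMono_of_mulLeftStrictMono mulRightMono_of_mulRightStrictMono

section ConvexChain

variable {G : Type*} [Group G] [LinearOrder G] [MulLeftStrictMono G] [MulRightStrictMono G]

theorem Subgroup.le_total_of_ordConnected {H K : Subgroup G} (hH : (H : Set G).OrdConnected)
    (hK : (K : Set G).OrdConnected) : H ≤ K ∨ K ≤ H := by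
  have mem_of_mabs_le {L : Subgroup G} (hL : (L : Set G).OrdConnected) {a b : G} (hb : b ∈ L)
      (hab : |a|ₘ ≤ |b|ₘ) : a ∈ L :=
    mabs_mem_iff.1 <| hL.out L.one_mem (mabs_mem_iff.2 hb) ⟨one_le_mabs a, hab⟩
  by_contra! ⟨hHK, hKH⟩
  obtain ⟨a, haH, haK⟩ := SetLike.not_le_iff_exists.1 hHK
  obtain ⟨b, hbK, hbH⟩ := SetLike.not_le_iff_exists.1 hKH
  rcases le_total |a|ₘ |b|ₘ with hab | hba
  · exact haK (mem_of_mabs_le hK hbK hab)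
  · exact hbH (mem_of_mabs_le hH haH hba)

theorem isChain_properConvexSubgroups : IsChain (· ≤ ·) (properConvexSubgroups G) :=
  fun _ hH _ hK _ => Subgroup.le_total_of_ordConnected hH.1 hK.1

theorem sSup_properConvexSubgroups_mem [Group.FG G] [Nontrivial G] :
    sSup (properConvexSubgroups G) ∈ properConvexSubgroups G :=
  have hne : (properConvexSubgroups G).Nonempty := ⟨⊥, bot_mem_properConvexSubgroups⟩
  have hdir := isChain_properConvexSubgroups.directedOn
  ⟨Subgroup.ordConnected_sSup_of_directedOn hne hdir fun _ hH => hH.1,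
    fun h => (Subgroup.top_mem_of_sSup_eq_top hne hdir h).2 rfl⟩

theorem apply_mem_sSup_properConvexSubgroups_iff [Group.FG G] [Nontrivial G] {φ : G ≃* G}
    (hφ : StrictMono φ) {g : G} :
    φ g ∈ sSup (properConvexSubgroups G) ↔ g ∈ sSup (properConvexSubgroups G) := by
  have hφsymm : StrictMono φ.symm := fun a b h => hφ.lt_iff_lt.1 (by simpa using h)
  have hC := sSup_properConvexSubgroups_mem (G := G)
  exact ⟨fun hg => le_sSup (comap_mem_properConvexSubgroups hφ.monotone hC) hg,
    fun hg => le_sSup (comap_mem_properConvexSubgroups hφsymm.monotone hC) (by simpa using hg)⟩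

end ConvexChain

open scoped commutatorElement

section Commutator

variable {G : Type*} [Group G] [LinearOrder G] [MulLeftStrictMono G]

theorem zpow_right_strictMono_of_one_lt {c : G} (hc : 1 < c) : StrictMono fun n : ℤ ↦ c ^ n :=
  strictMono_int_of_lt_succ fun n ↦ by
    rw [zpow_add_one]
    exact lt_mul_of_one_lt_right' _ hc

/-- `p g` is the integer part of the logarithm of `g` to the base `c`. -/
def IsZPowFloor (c : G) (p : G → ℤ) : Prop :=
  ∀ g, c ^ p g ≤ g ∧ g < c ^ (p g + 1)

namespace IsZPowFloor

variable {c : G} {p : G → ℤ}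

theorem one_lt (hp : IsZPowFloor c p) : 1 < c := by
  have h := (hp 1).1.trans_lt (hp 1).2
  rw [zpow_add_one] at h
  exact (lt_mul_iff_one_lt_right' _).1 h

theorem le_of_zpow_le (hp : IsZPowFloor c p) {k : ℤ} {g : G} (h : c ^ k ≤ g) : k ≤ p g :=
  Int.lt_add_one_iff.1 <|
    (zpow_right_strictMono_of_one_lt hp.one_lt).lt_iff_lt.1 (h.trans_lt (hp g).2)

theorem le_of_lt_zpow_add_one (hp : IsZPowFloor c p) {k : ℤ} {g : G} (h : g < c ^ (k + 1)) :
    p g ≤ k :=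
  Int.lt_add_one_iff.1 <|
    (zpow_right_strictMono_of_one_lt hp.one_lt).lt_iff_lt.1 ((hp g).1.trans_lt h)

theorem map_zpow (hp : IsZPowFloor c p) (k : ℤ) : p (c ^ k) = k :=
  le_antisymm (hp.le_of_lt_zpow_add_one (zpow_right_strictMono_of_one_lt hp.one_lt (lt_add_one k)))
    (hp.le_of_zpow_le le_rfl)

theorem map_one (hp : IsZPowFloor c p) : p 1 = 0 := by
  simpa using hp.map_zpow 0

theorem monotone (hp : IsZPowFloor c p) : Monotone p :=
  fun _ _ h => hp.le_of_zpow_le ((hp _).1.trans h)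

variable [MulRightStrictMono G]

theorem add_le_map_mul (hp : IsZPowFloor c p) (g h : G) : p g + p h ≤ p (g * h) :=
  hp.le_of_zpow_le (by rw [zpow_add]; exact mul_le_mul' (hp g).1 (hp h).1)

theorem map_mul_le (hp : IsZPowFloor c p) (g h : G) : p (g * h) ≤ p g + p h + 1 :=
  hp.le_of_lt_zpow_add_one <|
    calc g * h < c ^ (p g + 1) * c ^ (p h + 1) := mul_lt_mul_of_lt_of_lt (hp g).2 (hp h).2
      _ = c ^ (p g + p h + 1 + 1) := by rw [← zpow_add]; ring_nf

theorem map_conj_le (hp : IsZPowFloor c p) (w g : G) : p (w * g * w⁻¹) ≤ p g + 2 := by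
  have h₁ := hp.map_mul_le (w * g) w⁻¹
  have h₂ := hp.map_mul_le w g
  have h₃ := hp.add_le_map_mul w w⁻¹
  rw [mul_inv_cancel, hp.map_one] at h₃
  omega

end IsZPowFloor

variable [MulRightStrictMono G]

theorem exists_isZPowFloor {c : G} (hc : 1 < c) (hcof : ∀ g : G, ∃ n : ℕ, g ≤ c ^ n) :
    ∃ p, IsZPowFloor c p := by
  suffices ∀ g : G, ∃ k : ℤ, c ^ k ≤ g ∧ g < c ^ (k + 1) by
    choose p hp using this
    exact ⟨p, hp⟩
  intro g
  have hmono := zpow_right_strictMono_of_one_lt hc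
  obtain ⟨n, hn⟩ := hcof g
  obtain ⟨m, hm⟩ := hcof g⁻¹
  have hbdd : ∀ k : ℤ, c ^ k ≤ g → k ≤ n := fun k hk =>
    hmono.le_iff_le.1 (hk.trans (by rwa [zpow_natCast]))
  have hne : c ^ (-(m : ℤ)) ≤ g := by
    rw [zpow_neg, zpow_natCast]
    exact inv_le_of_inv_le' hm
  obtain ⟨k, hk, hmax⟩ := Int.exists_greatest_of_bdd ⟨n, hbdd⟩ ⟨_, hne⟩
  exact ⟨k, hk, lt_of_not_ge fun h => (lt_add_one k).not_ge (hmax _ h)⟩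

theorem mul_pow_le_pow_mul {a b : G} (h : a * b ≤ b * a) (n : ℕ) : a * b ^ n ≤ b ^ n * a := by
  induction n with
  | zero => simp
  | succ n ih =>
    calc a * b ^ (n + 1) = a * b ^ n * b := by rw [pow_succ, mul_assoc]
      _ ≤ b ^ n * a * b := mul_le_mul_left ih b
      _ ≤ b ^ n * (b * a) := by rw [mul_assoc]; exact mul_le_mul_right h _
      _ = b ^ (n + 1) * a := by rw [pow_succ, mul_assoc]

theorem pow_mul_pow_le_mul_pow {a b : G} (h : a * b ≤ b * a) (n : ℕ) :
    a ^ n * b ^ n ≤ (a * b) ^ n := by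
  induction n with
  | zero => simp
  | succ n ih =>
    calc a ^ (n + 1) * b ^ (n + 1) = a ^ n * (a * b ^ n) * b := by
          rw [pow_succ, pow_succ, mul_assoc, mul_assoc, mul_assoc]
      _ ≤ a ^ n * (b ^ n * a) * b :=
          mul_le_mul_left (mul_le_mul_right (mul_pow_le_pow_mul h n) _) _
      _ = a ^ n * b ^ n * (a * b) := by simp only [mul_assoc]
      _ ≤ (a * b) ^ n * (a * b) := mul_le_mul_left ih _
      _ = (a * b) ^ (n + 1) := (pow_succ _ _).symm

theorem not_isZPowFloor_commutatorElement (x y : G) (p : G → ℤ) :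
    ¬IsZPowFloor ⁅x, y⁆ p := by
  intro hp
  set c := ⁅x, y⁆
  have hcv : c * (y * x) = x * y := by simp only [c, commutatorElement_def]; group
  have hvc : y * x * c = y * x * (x * y) * (y * x)⁻¹ := by rw [← hcv]; group
  have hconj : (x * y) ^ 5 = x * (y * x) ^ 5 * x⁻¹ := by rw [← conj_pow]; group
  have hup : ∀ w, p (w * (x * y) ^ 5 * w⁻¹) ≤ p ((y * x) ^ 5) + 4 := fun w => by
    have := hp.map_conj_le w ((x * y) ^ 5)
    have := hp.map_conj_le x ((y * x) ^ 5)
    rw [← hconj] at this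
    omega
  have hc5 : p (c ^ 5) = 5 := by exact_mod_cast hp.map_zpow 5
  rcases le_total (c * (y * x)) (y * x * c) with h | h
  · have h₁ := hp.monotone (pow_mul_pow_le_mul_pow h 5)
    have h₂ := hp.add_le_map_mul (c ^ 5) ((y * x) ^ 5)
    have h₃ := hup 1
    rw [hcv] at h₁
    simp only [one_mul, inv_one, mul_one] at h₃
    omega
  · have h₁ := hp.monotone (pow_mul_pow_le_mul_pow h 5)
    have h₂ := hp.add_le_map_mul ((y * x) ^ 5) (c ^ 5)
    have h₃ := hup (y * x)
    rw [hvc, conj_pow] at h₁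
    omega

namespace Subgroup

/-- For `1 < c`, the smallest convex subgroup containing `c`. -/
def boundedByPowers (c : G) : Subgroup G where
  carrier := {g | ∃ n : ℕ, (c ^ n)⁻¹ ≤ g ∧ g ≤ c ^ n}
  one_mem' := ⟨0, by simp⟩
  mul_mem' := by
    rintro a b ⟨n, hna, han⟩ ⟨m, hmb, hbm⟩
    refine ⟨n + m, ?_, ?_⟩
    · calc (c ^ (n + m))⁻¹ = (c ^ n)⁻¹ * (c ^ m)⁻¹ := by
            rw [← mul_inv_rev, ← pow_add, add_comm]
        _ ≤ a * b := mul_le_mul' hna hmb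
    · calc a * b ≤ c ^ n * c ^ m := mul_le_mul' han hbm
        _ = c ^ (n + m) := (pow_add c n m).symm
  inv_mem' := by
    rintro g ⟨n, hng, hgn⟩
    exact ⟨n, inv_le_inv_iff.2 hgn, inv_le'.1 hng⟩

theorem ordConnected_boundedByPowers {c : G} (hc : 1 ≤ c) :
    ((boundedByPowers c : Subgroup G) : Set G).OrdConnected := by
  refine ⟨fun a ⟨n, hna, _⟩ b ⟨m, _, hbm⟩ g hg => ⟨n + m, ?_, ?_⟩⟩
  · calc (c ^ (n + m))⁻¹ ≤ (c ^ n)⁻¹ := inv_le_inv_iff.2 (pow_le_pow_right' hc (by omega))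
      _ ≤ g := hna.trans hg.1
  · calc g ≤ c ^ m := hg.2.trans hbm
      _ ≤ c ^ (n + m) := pow_le_pow_right' hc (by omega)

theorem self_mem_boundedByPowers {c : G} (hc : 1 ≤ c) : c ∈ boundedByPowers c :=
  ⟨1, by simpa using (inv_le_one'.2 hc).trans hc, by simp⟩

theorem boundedByPowers_ne_top {c : G} (h : ¬∀ g : G, ∃ n : ℕ, g ≤ c ^ n) :
    boundedByPowers c ≠ ⊤ := fun htop => h fun g => by
  obtain ⟨n, -, hn⟩ : g ∈ boundedByPowers c := htop ▸ mem_top g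
  exact ⟨n, hn⟩

end Subgroup

theorem exists_commutatorElement_mem_properConvexSubgroups [Nontrivial G] (x y : G) :
    ∃ H ∈ properConvexSubgroups G, ⁅x, y⁆ ∈ H := by
  wlog hc : 1 ≤ ⁅x, y⁆ generalizing x y
  · have hyx : 1 ≤ ⁅y, x⁆ := by
      rw [← commutatorElement_inv]
      exact one_le_inv'.2 (le_of_not_ge hc)
    obtain ⟨H, hH, hyx⟩ := this y x hyx
    exact ⟨H, hH, by simpa [commutatorElement_inv] using inv_mem hyx⟩
  rcases hc.eq_or_lt with hc | hc
  · exact ⟨⊥, bot_mem_properConvexSubgroups, hc ▸ one_mem _⟩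
  refine ⟨Subgroup.boundedByPowers ⁅x, y⁆, ⟨Subgroup.ordConnected_boundedByPowers hc.le,
    Subgroup.boundedByPowers_ne_top fun hcof => ?_⟩, Subgroup.self_mem_boundedByPowers hc.le⟩
  obtain ⟨p, hp⟩ := exists_isZPowFloor hc hcof
  exact not_isZPowFloor_commutatorElement x y p hp

end Commutator

/-- a finitely generated nontrivial bi-ordered group has a
unique maximal proper convex subgroup `C`; moreover `C` is normal, `G/C` is
abelian, and any order-preserving automorphism preserves `C`. -/
theorem maximal_convex_subgroup {G : Type*} [Group G] [LinearOrder G]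
    [CovariantClass G G (· * ·) (· < ·)]
    [CovariantClass G G (Function.swap (· * ·)) (· < ·)]
    [Group.FG G] [Nontrivial G] :
    ∃ C : Subgroup G,
      (∀ a ∈ C, ∀ b ∈ C, ∀ g : G, a < g → g < b → g ∈ C) ∧
      C ≠ ⊤ ∧
      (∀ D : Subgroup G,
        (∀ a ∈ D, ∀ b ∈ D, ∀ g : G, a < g → g < b → g ∈ D) →
        D ≠ ⊤ → D ≤ C) ∧
      C.Normal ∧
      (∀ x y : G, x * y * x⁻¹ * y⁻¹ ∈ C) ∧
      (∀ φ : G ≃* G, (∀ a b : G, a < b → φ a < φ b) →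
        ∀ g : G, g ∈ C ↔ φ g ∈ C) := by
  have hC := sSup_properConvexSubgroups_mem (G := G)
  have hconj (g : G) : StrictMono (MulAut.conj g) := fun a b h => by
    simpa only [MulAut.conj_apply] using mul_lt_mul_left (mul_lt_mul_right h g) g⁻¹
  refine ⟨sSup (properConvexSubgroups G), Set.ordConnected_iff_forall_lt_lt.1 hC.1, hC.2,
    fun D hD hDtop => le_sSup ⟨Set.ordConnected_iff_forall_lt_lt.2 hD, hDtop⟩,
    ⟨fun n hn g => (apply_mem_sSup_properConvexSubgroups_iff (hconj g)).2 hn⟩,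
    fun x y => ?_, fun φ hφ g => (apply_mem_sSup_properConvexSubgroups_iff hφ).symm⟩
  obtain ⟨H, hH, hxy⟩ := exists_commutatorElement_mem_properConvexSubgroups x y
  exact le_sSup hH hxy
end
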